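/- Let e ≥ 0 and f ≥ e+1 be integers, q = p^e, and define φ*(t) = [[1, t^q, 0, t^{p^f}], [0, 1, 0, 0], [0, 0, 1, t^q], [0, 0, 0, 1]] for t ∈ k and ω*(u) = diag(u^{p^f}, u^{p^f − 2q}, u^{2q − p^f}, u^{−p^f}) for u ∈ kˣ. Suppose φ⁻ : k → SL(4,k) satisfies: φ⁻(s+s') = φ⁻(s)·φ⁻(s') for all s,s' ∈ k; every matrix entry of φ⁻(s) is a polynomial function of s; φ⁻(s) is lower triangular for every s ∈ k; and φ*(t)·φ⁻(s) = φ⁻(s/(1+t·s)) · ω*(1+t·s) · φ*(t/(1+t·s)) for all t,s ∈ k with 1+t·s ≠ 0. Then p = 2, f = e+1, and φ⁻(s) = [[1,0,0,0], [0,1,0,0], [s^q, 0, 1, 0], [s^{2q}, s^q, 0, 1]] for every s ∈ k. -/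

import Mathlib

open Matrix

/-- The unipotent one-parameter subgroup `φ*` of form (V), with `q = p^e`, `qf = p^f`. -/
noncomputable def phiStarV (k : Type*) [Field k] (q qf : ℕ) (t : k) :
    Matrix (Fin 4) (Fin 4) k :=
  !![1, t ^ q, 0, t ^ qf;
     0, 1, 0, 0;
     0, 0, 1, t ^ q;
     0, 0, 0, 1]

/-- The cocharacter `ω*(u) = diag(u^{p^f}, u^{p^f−2q}, u^{2q−p^f}, u^{−p^f})` of form (V). -/
noncomputable def omegaStarV (k : Type*) [Field k] (q qf : ℕ) (u : kˣ) :
    Matrix (Fin 4) (Fin 4) k :=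
  Matrix.diagonal
    ![(u : k) ^ (qf : ℤ), (u : k) ^ ((qf : ℤ) - 2 * (q : ℤ)),
      (u : k) ^ (2 * (q : ℤ) - (qf : ℤ)), (u : k) ^ (-(qf : ℤ))]

/-!
Write `q = p^e` and `v = 1 + ts`; matrix entries are indexed from `0`. The diagonal entries of
`φ⁻` are polynomial functions of `s` without zeros, hence constant, hence `1`. Now compare entries
of the two sides of the relation. Entry `(1,3)` kills the `(1,0)` entry of `φ⁻` (every `r` is some
`s/(1+ts)` with `t ≠ 0`); entry `(1,1)` then says `v^(p^f - 2q) = 1` for all `v ≠ 0`, which in an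
infinite field forces `p^f = 2q`, so `p = 2` and `f = e + 1`. By the Frobenius identity
`(1 + ts)^q = 1 + t^q s^q`, entries `(0,0)`, `(0,1)`, `(0,2)` and `(2,3)` pin down the entries
`(3,0)`, `(3,1)`, `(3,2)` and `(2,0)`. Finally entry `(2,1)` shows that `s ↦ φ⁻(s)₂₁` is invariant
under `s ↦ s/(1+ts)`, so it is constant on `kˣ`; being additive, it vanishes.
-/

open Polynomial

theorem Polynomial.eval_eq_of_forall_eval_ne_zero {k : Type*} [Field k] [IsAlgClosed k]
    {P : k[X]} (hP : ∀ x, P.eval x ≠ 0) (x y : k) : P.eval x = P.eval y := by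
  have hdeg : P.degree ≤ 0 := not_lt.mp fun h =>
    let ⟨z, hz⟩ := IsAlgClosed.exists_root P h.ne'
    hP z hz
  rw [eq_C_of_degree_le_zero hdeg, eval_C, eval_C]

theorem Matrix.IsLowerTriangular.apply_self_ne_zero {n R : Type*} [Fintype n] [LinearOrder n]
    [CommRing R] {M : Matrix n n R} (hM : M.IsLowerTriangular) (hdet : M.det ≠ 0) (i : n) :
    M i i ≠ 0 := fun hi =>
  hdet <| (det_of_isLowerTriangular M hM).trans (Finset.prod_eq_zero (Finset.mem_univ i) hi)

theorem Matrix.SpecialLinearGroup.apply_self_eq_one_of_isLowerTriangular {n k : Type*}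
    [Fintype n] [LinearOrder n] [Field k] [IsAlgClosed k] {φ : k → SpecialLinearGroup n k}
    (h0 : φ 0 = 1) (htri : ∀ s, (φ s).1.IsLowerTriangular)
    (hpoly : ∀ i, ∃ P : k[X], ∀ s, (φ s).1 i i = P.eval s) (s : k) (i : n) :
    (φ s).1 i i = 1 := by
  obtain ⟨P, hP⟩ := hpoly i
  have hP0 : ∀ x, P.eval x ≠ 0 := fun x =>
    hP x ▸ (htri x).apply_self_ne_zero (by simp [(φ x).2]) i
  rw [hP, eval_eq_of_forall_eval_ne_zero hP0 s 0, ← hP, h0]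
  simp

theorem eq_zero_of_forall_zpow_eq_one {K : Type*} [Field K] [Infinite K] {m : ℤ}
    (h : ∀ v : K, v ≠ 0 → v ^ m = 1) : m = 0 := by
  suffices m.natAbs = 0 by omega
  by_contra hm
  have hroots : ({0}ᶜ : Set K) ⊆ nthRootsFinset m.natAbs (1 : K) := fun v hv0 => by
    rw [Finset.mem_coe, mem_nthRootsFinset (Nat.pos_of_ne_zero hm)]
    have hv := h v hv0
    rcases m.natAbs_eq with hm' | hm' <;> rw [hm'] at hv
    · exact_mod_cast hv
    · rwa [_root_.zpow_neg, inv_eq_one, zpow_natCast] at hv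
  exact (Set.finite_singleton 0).infinite_compl ((nthRootsFinset _ _).finite_toSet.subset hroots)

theorem Nat.Prime.eq_two_and_eq_succ_of_pow_eq_two_mul_pow {p e f : ℕ} (hp : p.Prime)
    (h : p ^ f = 2 * p ^ e) : p = 2 ∧ f = e + 1 := by
  have hef : e < f := (Nat.pow_lt_pow_iff_right hp.one_lt).mp <| by
    rw [h]
    have := pow_pos hp.pos e
    omega
  have h2 : p ^ (f - e) = 2 := by
    apply Nat.eq_of_mul_eq_mul_right (pow_pos hp.pos e)
    rw [← pow_add, Nat.sub_add_cancel hef.le, h]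
  obtain ⟨rfl, h1⟩ := Nat.prime_two.pow_eq_iff.mp h2
  exact ⟨rfl, by omega⟩

theorem exists_ne_zero_one_add_mul_ne_zero {K : Type*} [Field K] [Infinite K] (s : K) :
    ∃ t : K, t ≠ 0 ∧ 1 + t * s ≠ 0 := by
  classical
  obtain ⟨t, ht⟩ := Infinite.exists_notMem_finset ({0, -s⁻¹} : Finset K)
  simp only [Finset.mem_insert, Finset.mem_singleton, not_or] at ht
  refine ⟨t, ht.1, fun h => ht.2 ?_⟩
  have hs : s ≠ 0 := by rintro rfl; simp at h
  field_simp
  linear_combination h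

theorem exists_div_one_add_mul_eq {K : Type*} [Field K] [Infinite K] (r : K) :
    ∃ t s : K, t ≠ 0 ∧ 1 + t * s ≠ 0 ∧ s / (1 + t * s) = r := by
  obtain ⟨t, ht, htr⟩ := exists_ne_zero_one_add_mul_ne_zero (-r)
  rw [mul_neg, ← sub_eq_add_neg] at htr
  have hv : 1 + t * (r / (1 - t * r)) = (1 - t * r)⁻¹ := by
    field_simp
    ring
  refine ⟨t, r / (1 - t * r), ht, ?_, ?_⟩
  · rw [hv]; exact inv_ne_zero htr
  · rw [hv, div_inv_eq_mul, div_mul_cancel₀ _ htr]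

theorem eq_zero_of_map_add_of_forall_ne_zero_eq {K M : Type*} [Field K] [Infinite K]
    [AddCancelMonoid M] {d : K → M} (hadd : ∀ x y, d (x + y) = d x + d y)
    (hconst : ∀ x, x ≠ 0 → d x = d 1) (x : K) : d x = 0 := by
  classical
  obtain ⟨y, hy⟩ := Infinite.exists_notMem_finset ({0, -1} : Finset K)
  simp only [Finset.mem_insert, Finset.mem_singleton, not_or] at hy
  have hy1 : 1 + y ≠ 0 := fun h => hy.2 (by linear_combination h)
  have hd1 : d 1 = 0 := by
    have h := hadd 1 y
    rwa [hconst _ hy1, hconst _ hy.1, left_eq_add] at h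
  rcases eq_or_ne x 0 with rfl | hx
  · simpa using hadd 0 0
  · rw [hconst x hx, hd1]

structure IsOppositeBruhatV {k : Type*} [Field k] (q Q : ℕ) (L : k → Matrix (Fin 4) (Fin 4) k) :
    Prop where
  apply_of_lt : ∀ s i j, i < j → L s i j = 0
  apply_self : ∀ s i, L s i i = 1
  bruhat : ∀ (t s : k) (h : 1 + t * s ≠ 0),
    phiStarV k q Q t * L s =
      L (s / (1 + t * s)) * omegaStarV k q Q (Units.mk0 (1 + t * s) h) *
        phiStarV k q Q (t / (1 + t * s))

namespace IsOppositeBruhatV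

variable {k : Type*} [Field k] {q Q : ℕ} {L : k → Matrix (Fin 4) (Fin 4) k}

theorem bruhat_apply_one_three (hL : IsOppositeBruhatV q Q L) (t s : k) (h : 1 + t * s ≠ 0) :
    L (s / (1 + t * s)) 1 0 * (1 + t * s) ^ Q * (t / (1 + t * s)) ^ Q = 0 := by
  simpa [phiStarV, omegaStarV, mul_apply, Fin.sum_univ_four, hL.apply_of_lt, hL.apply_self]
    using (congrFun₂ (hL.bruhat t s h) 1 3).symm

theorem bruhat_apply_one_one (hL : IsOppositeBruhatV q Q L) (t s : k) (h : 1 + t * s ≠ 0) :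
    L (s / (1 + t * s)) 1 0 * (1 + t * s) ^ Q * (t / (1 + t * s)) ^ q +
      (1 + t * s) ^ ((Q : ℤ) - 2 * q) = 1 := by
  simpa [phiStarV, omegaStarV, mul_apply, Fin.sum_univ_four, hL.apply_of_lt, hL.apply_self]
    using (congrFun₂ (hL.bruhat t s h) 1 1).symm

theorem bruhat_apply_zero_two (hL : IsOppositeBruhatV q Q L) (t s : k) (h : 1 + t * s ≠ 0) :
    t ^ Q * L s 3 2 = 0 := by
  simpa [phiStarV, omegaStarV, mul_apply, Fin.sum_univ_four, hL.apply_of_lt, hL.apply_self]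
    using congrFun₂ (hL.bruhat t s h) 0 2

theorem bruhat_apply_zero_zero (hL : IsOppositeBruhatV q Q L) (t s : k) (h : 1 + t * s ≠ 0) :
    1 + t ^ q * L s 1 0 + t ^ Q * L s 3 0 = (1 + t * s) ^ Q := by
  simpa [phiStarV, omegaStarV, mul_apply, Fin.sum_univ_four, hL.apply_of_lt, hL.apply_self]
    using congrFun₂ (hL.bruhat t s h) 0 0

theorem bruhat_apply_zero_one (hL : IsOppositeBruhatV q Q L) (t s : k) (h : 1 + t * s ≠ 0) :
    t ^ q + t ^ Q * L s 3 1 = (1 + t * s) ^ Q * (t / (1 + t * s)) ^ q := by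
  simpa [phiStarV, omegaStarV, mul_apply, Fin.sum_univ_four, hL.apply_of_lt, hL.apply_self]
    using congrFun₂ (hL.bruhat t s h) 0 1

theorem bruhat_apply_two_three (hL : IsOppositeBruhatV q Q L) (t s : k) (h : 1 + t * s ≠ 0) :
    t ^ q = L (s / (1 + t * s)) 2 0 * (1 + t * s) ^ Q * (t / (1 + t * s)) ^ Q +
      (1 + t * s) ^ (2 * (q : ℤ) - Q) * (t / (1 + t * s)) ^ q := by
  simpa [phiStarV, omegaStarV, mul_apply, Fin.sum_univ_four, hL.apply_of_lt, hL.apply_self]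
    using congrFun₂ (hL.bruhat t s h) 2 3

theorem bruhat_apply_two_one (hL : IsOppositeBruhatV q Q L) (t s : k) (h : 1 + t * s ≠ 0) :
    L s 2 1 + t ^ q * L s 3 1 =
      L (s / (1 + t * s)) 2 0 * (1 + t * s) ^ Q * (t / (1 + t * s)) ^ q +
        L (s / (1 + t * s)) 2 1 * (1 + t * s) ^ ((Q : ℤ) - 2 * q) := by
  simpa [phiStarV, omegaStarV, mul_apply, Fin.sum_univ_four, hL.apply_of_lt, hL.apply_self]
    using congrFun₂ (hL.bruhat t s h) 2 1

theorem apply_one_zero [Infinite k] (hL : IsOppositeBruhatV q Q L) (r : k) : L r 1 0 = 0 := by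
  obtain ⟨t, s, ht, hv, rfl⟩ := exists_div_one_add_mul_eq r
  simpa [ht, hv] using hL.bruhat_apply_one_three t s hv

theorem zpow_sub_eq_one [Infinite k] (hL : IsOppositeBruhatV q Q L) (v : k) (hv : v ≠ 0) :
    v ^ ((Q : ℤ) - 2 * q) = 1 := by
  simpa [hL.apply_one_zero] using hL.bruhat_apply_one_one (v - 1) 1 (by simpa using hv)

theorem apply_three_two [Infinite k] (hL : IsOppositeBruhatV q Q L) (s : k) : L s 3 2 = 0 := by
  obtain ⟨t, ht, hv⟩ := exists_ne_zero_one_add_mul_ne_zero s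
  simpa [ht] using hL.bruhat_apply_zero_two t s hv

theorem apply_three_zero [Infinite k] {p f : ℕ} [ExpChar k p]
    (hL : IsOppositeBruhatV q (p ^ f) L) (s : k) : L s 3 0 = s ^ p ^ f := by
  obtain ⟨t, ht, hv⟩ := exists_ne_zero_one_add_mul_ne_zero s
  have h00 := hL.bruhat_apply_zero_zero t s hv
  rw [hL.apply_one_zero, mul_zero, add_zero, add_pow_expChar_pow, one_pow, mul_pow] at h00
  exact mul_left_cancel₀ (pow_ne_zero _ ht) (add_left_cancel h00)

theorem apply_three_one [Infinite k] {p e : ℕ} [ExpChar k p]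
    (hL : IsOppositeBruhatV (p ^ e) (2 * p ^ e) L) (s : k) : L s 3 1 = s ^ p ^ e := by
  obtain ⟨t, ht, hv⟩ := exists_ne_zero_one_add_mul_ne_zero s
  have h01 := hL.bruhat_apply_zero_one t s hv
  rw [div_pow, pow_mul' (1 + t * s), pow_mul' t, sq ((1 + t * s) ^ p ^ e), mul_assoc,
    mul_div_cancel₀ _ (pow_ne_zero _ hv), add_pow_expChar_pow, one_pow, mul_pow] at h01
  exact mul_left_cancel₀ (pow_ne_zero 2 (pow_ne_zero (p ^ e) ht)) (by linear_combination h01)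

theorem apply_two_zero [Infinite k] {p e : ℕ} [ExpChar k p]
    (hL : IsOppositeBruhatV (p ^ e) (2 * p ^ e) L) (r : k) : L r 2 0 = r ^ p ^ e := by
  obtain ⟨t, s, ht, hv, rfl⟩ := exists_div_one_add_mul_eq r
  have h23 := hL.bruhat_apply_two_three t s hv
  generalize L (s / (1 + t * s)) 2 0 = c at h23
  have hV : 1 + t ^ p ^ e * s ^ p ^ e ≠ 0 := by
    simpa [add_pow_expChar_pow, mul_pow] using pow_ne_zero (p ^ e) hv
  rw [show 2 * ((p ^ e : ℕ) : ℤ) - ((2 * p ^ e : ℕ) : ℤ) = 0 by push_cast; ring, zpow_zero,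
    one_mul, mul_assoc, ← mul_pow, mul_div_cancel₀ _ hv, div_pow, pow_mul', add_pow_expChar_pow,
    one_pow, mul_pow] at h23
  rw [div_pow, add_pow_expChar_pow, one_pow, mul_pow, eq_div_iff hV]
  apply mul_left_cancel₀ (pow_ne_zero 2 (pow_ne_zero (p ^ e) ht))
  field_simp at h23
  linear_combination (-t ^ p ^ e) * h23

theorem apply_two_one_div [Infinite k] {p e : ℕ} [ExpChar k p]
    (hL : IsOppositeBruhatV (p ^ e) (2 * p ^ e) L) (t s : k) (hv : 1 + t * s ≠ 0) :
    L s 2 1 = L (s / (1 + t * s)) 2 1 := by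
  have h21 := hL.bruhat_apply_two_one t s hv
  have hst : s / (1 + t * s) * (1 + t * s) ^ 2 * (t / (1 + t * s)) = t * s := by
    rw [sq, div_mul_eq_mul_div, mul_div_assoc, mul_div_cancel_right₀ _ hv, mul_assoc,
      mul_div_cancel₀ _ hv, mul_comm]
  rw [show ((2 * p ^ e : ℕ) : ℤ) - 2 * ((p ^ e : ℕ) : ℤ) = 0 by push_cast; ring, zpow_zero,
    mul_one, hL.apply_three_one, hL.apply_two_zero, pow_mul (1 + t * s),
    ← mul_pow (s / (1 + t * s)), ← mul_pow (s / (1 + t * s) * (1 + t * s) ^ 2), hst,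
    mul_pow] at h21
  linear_combination h21

theorem apply_two_one [Infinite k] {p e : ℕ} [ExpChar k p]
    (hL : IsOppositeBruhatV (p ^ e) (2 * p ^ e) L) (hadd : ∀ x y, L (x + y) = L x * L y) (s : k) :
    L s 2 1 = 0 := by
  refine eq_zero_of_map_add_of_forall_ne_zero_eq (d := fun s => L s 2 1) (fun x y => ?_)
    (fun x hx => ?_) s
  · simp [hadd, mul_apply, Fin.sum_univ_four, hL.apply_of_lt, hL.apply_self]
  · have h := hL.apply_two_one_div (x⁻¹ - 1) 1 (by simpa using hx)
    rwa [show 1 / (1 + (x⁻¹ - 1) * 1) = x by simp, eq_comm] at h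

end IsOppositeBruhatV

theorem stmt7 {k : Type*} [Field k] [IsAlgClosed k] {p : ℕ} [Fact p.Prime] [CharP k p]
    (e f : ℕ)
    (φm : k → SpecialLinearGroup (Fin 4) k)
    (hadd : ∀ s s' : k, φm (s + s') = φm s * φm s')
    (hpoly : ∀ i j : Fin 4, ∃ P : Polynomial k, ∀ s : k, (φm s).1 i j = P.eval s)
    (htri : ∀ (s : k) (i j : Fin 4), i < j → (φm s).1 i j = 0)
    (hrel : ∀ (t s : k) (h : 1 + t * s ≠ 0),
      phiStarV k (p ^ e) (p ^ f) t * (φm s).1 =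
        (φm (s / (1 + t * s))).1 * omegaStarV k (p ^ e) (p ^ f) (Units.mk0 (1 + t * s) h) *
          phiStarV k (p ^ e) (p ^ f) (t / (1 + t * s))) :
    p = 2 ∧ f = e + 1 ∧
      ∀ s : k, (φm s).1 =
        !![1, 0, 0, 0;
           0, 1, 0, 0;
           s ^ p ^ e, 0, 1, 0;
           s ^ (2 * p ^ e), s ^ p ^ e, 0, 1] := by
  have hφ0 : φm 0 = 1 := mul_eq_left.mp (by rw [← hadd, add_zero] : φm 0 * φm 0 = φm 0)
  have hL : IsOppositeBruhatV (p ^ e) (p ^ f) fun s => (φm s).1 :=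
    ⟨htri, SpecialLinearGroup.apply_self_eq_one_of_isLowerTriangular hφ0
      (fun s _ _ => htri s _ _) (fun i => hpoly i i), hrel⟩
  obtain ⟨rfl, rfl⟩ : p = 2 ∧ f = e + 1 := by
    refine (Fact.out : p.Prime).eq_two_and_eq_succ_of_pow_eq_two_mul_pow ?_
    have := eq_zero_of_forall_zpow_eq_one hL.zpow_sub_eq_one
    omega
  have hL' : IsOppositeBruhatV (2 ^ e) (2 * 2 ^ e) fun s => (φm s).1 := by
    rwa [pow_succ'] at hL
  refine ⟨rfl, rfl, fun s => ?_⟩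
  have h30 : (φm s).1 3 0 = s ^ (2 * 2 ^ e) := by rw [← pow_succ']; exact hL.apply_three_zero s
  ext i j
  fin_cases i <;> fin_cases j <;>
    simp [hL.apply_of_lt, hL.apply_self, hL.apply_one_zero, hL'.apply_two_zero,
      hL'.apply_two_one (fun x y => congrArg Subtype.val (hadd x y)), h30, hL'.apply_three_one,
      hL.apply_three_two]
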